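/- arXiv:1812.02413 — 3 statements merged into one kernel-verified Lean document; each statement's English description precedes it below -/
import Mathlib

section
/- For two finite sets of distinct positive real numbers 0 < a_1 < ... < a_n and 0 < b_1 < ... < b_n, the n×n matrix M with entries M_{i,j} = a_i^{b_j} has nonzero determinant. -/
/-!
Suppose `M c = 0`, i.e. the generalized polynomial `∑ⱼ cⱼ tᵇʲ` vanishes at the `n` points `aᵢ`.
Dividing by `t^b₀` and applying Rolle's theorem between consecutive zeros, the derivative
`∑_{j>0} cⱼ (bⱼ - b₀) t^(bⱼ - b₀ - 1)` has `n - 1` increasing positive zeros. It is a generalized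
polynomial with one term fewer, so by induction `cⱼ (bⱼ - b₀) = 0`, hence `cⱼ = 0`, for `j > 0`;
then `c₀ = 0` too.
-/

open Finset

lemma hasDerivAt_sum_mul_rpow {ι : Type*} [Fintype ι] (c e : ι → ℝ) {t : ℝ} (ht : 0 < t) :
    HasDerivAt (fun s => ∑ j, c j * s ^ e j) (∑ j, c j * (e j * t ^ (e j - 1))) t :=
  HasDerivAt.fun_sum fun j _ => (Real.hasDerivAt_rpow_const (Or.inl ht.ne')).const_mul (c j)

lemma sum_mul_rpow_sub {ι : Type*} [Fintype ι] (c e : ι → ℝ) (β : ℝ) {t : ℝ} (ht : 0 < t) :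
    ∑ j, c j * t ^ (e j - β) = (∑ j, c j * t ^ e j) / t ^ β := by
  simp only [Finset.sum_div, Real.rpow_sub ht, mul_div_assoc]

lemma exists_strictMono_zeros_of_hasDerivAt {n : ℕ} {f f' : ℝ → ℝ} {x : Fin (n + 1) → ℝ}
    (hx : StrictMono x) (hfx : ∀ i, f (x i) = 0)
    (hf : ∀ t, x 0 ≤ t → HasDerivAt f (f' t) t) :
    ∃ y : Fin n → ℝ, StrictMono y ∧ (∀ i, y i ∈ Set.Ioo (x i.castSucc) (x i.succ)) ∧
      ∀ i, f' (y i) = 0 := by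
  have hrolle : ∀ i : Fin n, ∃ t ∈ Set.Ioo (x i.castSucc) (x i.succ), f' t = 0 := by
    intro i
    have hle : ∀ t, x i.castSucc ≤ t → x 0 ≤ t := fun t ht =>
      (hx.monotone (Fin.zero_le _)).trans ht
    refine exists_hasDerivAt_eq_zero (f := f) (hx Fin.castSucc_lt_succ) ?_ (by rw [hfx, hfx]) ?_
    · exact fun t ht => (hf t (hle t ht.1)).continuousAt.continuousWithinAt
    · exact fun t ht => hf t (hle t ht.1.le)
  choose y hy hy' using hrolle
  refine ⟨y, fun i j hij => ?_, hy, hy'⟩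
  calc y i < x i.succ := (hy i).2
    _ ≤ x j.castSucc := hx.monotone (Fin.succ_le_castSucc_iff.mpr hij)
    _ < y j := (hy j).1

theorem eq_zero_of_sum_mul_rpow_eq_zero {n : ℕ} {b : Fin n → ℝ} (hb : StrictMono b)
    {c x : Fin n → ℝ} (hx_pos : ∀ i, 0 < x i) (hx : StrictMono x)
    (hcx : ∀ i, ∑ j, c j * x i ^ b j = 0) : c = 0 := by
  induction n with
  | zero => exact funext fun j => j.elim0
  | succ n ih =>
    set e : Fin (n + 1) → ℝ := fun j => b j - b 0
    have he_pos : ∀ j : Fin n, 0 < e j.succ := fun j => sub_pos.mpr (hb j.succ_pos)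
    obtain ⟨y, hy, hy_mem, hy_zero⟩ := exists_strictMono_zeros_of_hasDerivAt hx
      (f := fun t => ∑ j, c j * t ^ e j)
      (fun i => by rw [sum_mul_rpow_sub c b (b 0) (hx_pos i), hcx i, zero_div])
      (fun t ht => hasDerivAt_sum_mul_rpow c e ((hx_pos 0).trans_le ht))
    have hce : (fun j : Fin n => c j.succ * e j.succ) = 0 := by
      refine ih (b := fun j => e j.succ - 1) (x := y) (fun i j hij => ?_)
        (fun i => (hx_pos _).trans (hy_mem i).1) hy fun i => ?_
      · simpa [e] using hb (Fin.succ_lt_succ_iff.mpr hij)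
      · have := hy_zero i
        simp only [Fin.sum_univ_succ, e, sub_self, zero_mul, mul_zero, zero_add] at this
        simpa only [mul_assoc] using this
    have hc_succ : ∀ j : Fin n, c j.succ = 0 := fun j =>
      (mul_eq_zero.mp (congrFun hce j)).resolve_right (he_pos j).ne'
    have hc_zero : c 0 = 0 := by
      have h := hcx 0
      simp only [Fin.sum_univ_succ, hc_succ, zero_mul, sum_const_zero, add_zero] at h
      exact (mul_eq_zero.mp h).resolve_right (Real.rpow_pos_of_pos (hx_pos 0) _).ne'
    funext j
    exact Fin.cases hc_zero hc_succ j

theorem stmt_0_general (n : ℕ) (a b : Fin n → ℝ)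
    (ha_pos : ∀ i, 0 < a i)
    (ha : StrictMono a) (hb : StrictMono b) :
    Matrix.det (Matrix.of fun i j => (a i) ^ (b j)) ≠ 0 := by
  intro hdet
  obtain ⟨c, hc, hMc⟩ := Matrix.exists_mulVec_eq_zero_iff.mpr hdet
  refine hc (eq_zero_of_sum_mul_rpow_eq_zero hb ha_pos ha fun i => ?_)
  simpa [Matrix.mulVec, dotProduct, mul_comm] using congrFun hMc i

theorem stmt_0 (n : ℕ) (a b : Fin n → ℝ)
    (ha_pos : ∀ i, 0 < a i) (hb_pos : ∀ i, 0 < b i)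
    (ha : StrictMono a) (hb : StrictMono b) :
    Matrix.det (Matrix.of fun i j => (a i) ^ (b j)) ≠ 0 :=
  stmt_0_general n a b ha_pos ha hb
end

section
/- Let R be a commutative ring and x_1, x_2 ∈ R a regular sequence (x_1 not a zero divisor, x_2 not a zero divisor mod x_1). If f_0, ..., f_ℓ ∈ R satisfy ∑_{j=0}^{ℓ} x_1^j x_2^{ℓ-j} f_j = 0, then each f_j belongs to the ideal (x_1, x_2). -/
private lemma aux_pow {R : Type*} [CommRing R] (x₁ x₂ : R)
    (hreg₂ : ∀ r : R, x₂ * r ∈ Ideal.span {x₁} → r ∈ Ideal.span {x₁}) :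
    ∀ n (r : R), x₂ ^ n * r ∈ Ideal.span {x₁} → r ∈ Ideal.span {x₁} := by
  intro n
  induction n with
  | zero => intro r h; simpa using h
  | succ n ih =>
    intro r h
    apply hreg₂
    apply ih
    rwa [pow_succ, mul_assoc] at h

private lemma aux_key {R : Type*} [CommRing R] (x₁ x₂ : R)
    (hreg₁ : ∀ r : R, x₁ * r = 0 → r = 0)
    (hreg₂ : ∀ r : R, x₂ * r ∈ Ideal.span {x₁} → r ∈ Ideal.span {x₁}) :
    ∀ (n : ℕ) (f : Fin (n + 1) → R),
      (∑ j : Fin (n + 1), x₁ ^ (j : ℕ) * x₂ ^ (n - (j : ℕ)) * f j = 0) →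
      ∀ j, f j ∈ Ideal.span {x₁, x₂} := by
  intro n
  induction n with
  | zero =>
    intro f hf j
    fin_cases j
    simp [Fin.sum_univ_succ] at hf
    simp [hf]
  | succ n ih =>
    intro f hf j
    have hx₁ : x₁ ∈ Ideal.span ({x₁, x₂} : Set R) :=
      Ideal.subset_span (Set.mem_insert _ _)
    have hx₂ : x₂ ∈ Ideal.span ({x₁, x₂} : Set R) :=
      Ideal.subset_span (Set.mem_insert_of_mem _ rfl)
    -- f 0 ∈ span {x₁}
    rw [Fin.sum_univ_succ] at hf
    simp only [Fin.val_zero, pow_zero, one_mul, Nat.sub_zero, Fin.val_succ] at hf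
    have h0 : f 0 ∈ Ideal.span ({x₁} : Set R) := by
      apply aux_pow x₁ x₂ hreg₂ (n + 1)
      have heq : x₂ ^ (n + 1) * f 0 =
          -∑ i : Fin (n + 1), x₁ ^ ((i : ℕ) + 1) * x₂ ^ (n + 1 - ((i : ℕ) + 1)) * f i.succ := by
        linear_combination hf
      rw [heq]
      apply neg_mem
      apply Ideal.sum_mem
      intro i _
      rw [pow_succ']
      exact Ideal.mul_mem_right _ _ (Ideal.mul_mem_right _ _
        (Ideal.mul_mem_right _ _ (Ideal.mem_span_singleton_self x₁)))
    obtain ⟨g, hg⟩ := Ideal.mem_span_singleton'.mp h0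
    -- hg : g * x₁ = f 0
    set f' : Fin (n + 1) → R := Fin.cases (x₂ * g + f 1) (fun i => f i.succ.succ) with hf'
    have hsum : ∑ i : Fin (n + 1), x₁ ^ (i : ℕ) * x₂ ^ (n - (i : ℕ)) * f' i = 0 := by
      apply hreg₁
      rw [Finset.mul_sum]
      rw [Fin.sum_univ_succ]
      simp only [hf', Fin.cases_zero, Fin.cases_succ, Fin.val_zero, Fin.val_succ,
        pow_zero, one_mul, Nat.sub_zero]
      rw [Fin.sum_univ_succ] at hf
      simp only [Fin.val_zero, Fin.val_succ] at hf
      have e1 : ∀ i : Fin n, x₁ * (x₁ ^ ((i : ℕ) + 1) * x₂ ^ (n - ((i : ℕ) + 1)) * f i.succ.succ)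
          = x₁ ^ ((i : ℕ) + 1 + 1) * x₂ ^ (n + 1 - ((i : ℕ) + 1 + 1)) * f i.succ.succ := by
        intro i
        have : n - ((i : ℕ) + 1) = n + 1 - ((i : ℕ) + 1 + 1) := by omega
        rw [this]; ring
      rw [Finset.sum_congr rfl (fun i _ => e1 i)]
      have : x₁ * (x₂ ^ n * (x₂ * g + f 1)) =
          x₂ ^ (n + 1) * f 0 + x₁ ^ (0 + 1) * x₂ ^ (n + 1 - (0 + 1)) * f 1 := by
        rw [← hg]
        simp only [zero_add, pow_one, Nat.add_sub_cancel]
        ring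
      rw [this]
      simp only [Fin.succ_zero_eq_one] at hf ⊢
      linear_combination hf
    have hmem := ih f' hsum
    induction j using Fin.cases with
    | zero =>
      rw [← hg]
      exact Ideal.mul_mem_left _ _ hx₁
    | succ i =>
      induction i using Fin.cases with
      | zero =>
        have h1 : f 1 = f' 0 - x₂ * g := by simp [hf']
        rw [Fin.succ_zero_eq_one, h1]
        exact sub_mem (hmem 0) (Ideal.mul_mem_right _ _ hx₂)
      | succ k =>
        have : f k.succ.succ = f' k.succ := by simp [hf']
        rw [this]
        exact hmem k.succ

theorem stmt_3 (R : Type*) [CommRing R] (x₁ x₂ : R)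
    (hreg₁ : ∀ r : R, x₁ * r = 0 → r = 0)
    (hreg₂ : ∀ r : R, x₂ * r ∈ Ideal.span {x₁} → r ∈ Ideal.span {x₁})
    (ℓ : ℕ) (f : Fin (ℓ + 1) → R)
    (hf : ∑ j : Fin (ℓ + 1), x₁ ^ (j : ℕ) * x₂ ^ (ℓ - (j : ℕ)) * f j = 0) :
    ∀ j, f j ∈ Ideal.span {x₁, x₂} := by
  exact aux_key x₁ x₂ hreg₁ hreg₂ ℓ f hf
end

section
/- Let V be a 2-dimensional vector space over a field of characteristic 0 with basis e₁, e₂, let R be a commutative ring, and let x₁, x₂ ∈ R form a regular sequence. Define d: ∧²V ⊗ Sym^{k−1}(V) ⊗ R → Sym^k(V) ⊗ R by d(e₁∧e₂ ⊗ α ⊗ r) = e₁α ⊗ x₂r − e₂α ⊗ x₁r. Then d is injective. -/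
/-- The Koszul-type differential `d : ∧²V ⊗ Sym^{k-1}(V) ⊗ R → Sym^k(V) ⊗ R`,
`d(e₁∧e₂ ⊗ α ⊗ r) = e₁α ⊗ x₂r − e₂α ⊗ x₁r`, written in the bases
`e₁∧e₂ ⊗ e₁^i e₂^{k-1-i}` (for `i < k`) of the source and `e₁^j e₂^{k-j}`
(for `j < k+1`) of the target, so that elements of the source (resp. target)
are coordinate vectors `Fin k → R` (resp. `Fin (k+1) → R`). -/
def koszulD {R : Type*} [CommRing R] (x₁ x₂ : R) (k : ℕ) (g : Fin k → R) :
    Fin (k + 1) → R := fun j =>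
  (if h : 0 < (j : ℕ) then x₂ * g ⟨(j : ℕ) - 1, by omega⟩ else 0) -
  (if h : (j : ℕ) < k then x₁ * g ⟨(j : ℕ), h⟩ else 0)

theorem stmt_19 (R : Type*) [CommRing R] (x₁ x₂ : R)
    (hreg₁ : ∀ r : R, x₁ * r = 0 → r = 0)
    (hreg₂ : ∀ r : R, x₂ * r ∈ Ideal.span {x₁} → r ∈ Ideal.span {x₁})
    (hdiv : ∀ a : R, (∀ n : ℕ, x₁ ^ n ∣ a) → a = 0)
    (k : ℕ) (hk : 1 ≤ k) :
    Function.Injective (koszulD x₁ x₂ k) := by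
  intro g g' hg
  have key : ∀ n : ℕ, ∀ h : n < k, g ⟨n, h⟩ = g' ⟨n, h⟩ := by
    intro n
    induction n with
    | zero =>
      intro h
      have h0 := congrFun hg ⟨0, by omega⟩
      simp only [koszulD, Fin.val_mk, Nat.lt_irrefl, dite_false, zero_sub] at h0
      rw [dif_pos h, dif_pos h] at h0
      have : x₁ * (g ⟨0, h⟩ - g' ⟨0, h⟩) = 0 := by linear_combination -h0
      have := hreg₁ _ this
      exact sub_eq_zero.mp this
    | succ m ih =>
      intro h
      have hm : m < k := by omega
      have h1 := congrFun hg ⟨m + 1, by omega⟩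
      simp only [koszulD, Fin.val_mk] at h1
      rw [dif_pos (by omega : 0 < m + 1), dif_pos (by omega : 0 < m + 1),
        dif_pos h, dif_pos h] at h1
      simp only [Nat.add_sub_cancel] at h1
      rw [ih hm] at h1
      have : x₁ * (g ⟨m + 1, h⟩ - g' ⟨m + 1, h⟩) = 0 := by
        linear_combination -h1
      have := hreg₁ _ this
      exact sub_eq_zero.mp this
  funext i
  have : i = ⟨i.val, i.isLt⟩ := rfl
  rw [this]; exact key i.val i.isLt
end
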